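/- arXiv:1101.1458 — 5 statements merged into one kernel-verified Lean document; each statement's English description precedes it below -/
import Mathlib

section
/- Let $W$ be a totally nonnegative $m \times n$ real matrix with $m,n \geq 2$, and let $\mathcal{L}(W)$ denote the $(m-1)\times(n-1)$ matrix of consecutive $2\times 2$ minors of $W$, with entries $\mathcal{L}(W)_{i,j} = w_{i,j}w_{i+1,j+1} - w_{i,j+1}w_{i+1,j}$. Then every $2\times 2$ minor of $\mathcal{L}(W)$ is nonnegative: for all indices $i_1 < i_2$ and $j_1 < j_2$, $\mathcal{L}(W)_{i_1,j_1}\mathcal{L}(W)_{i_2,j_2} - \mathcal{L}(W)_{i_1,j_2}\mathcal{L}(W)_{i_2,j_1} \geq 0$. -/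
/-- An `m × n` real matrix is totally nonnegative if every minor (determinant of a
submatrix selected by strictly increasing row and column index maps) is nonnegative. -/
def IsTotallyNonneg {m n : ℕ} (W : Matrix (Fin m) (Fin n) ℝ) : Prop :=
  ∀ (k : ℕ) (r : Fin k → Fin m) (c : Fin k → Fin n),
    StrictMono r → StrictMono c → 0 ≤ (W.submatrix r c).det

/-- The operator `𝓛` sending an `(m+1) × (n+1)` matrix to its `m × n` matrix of
consecutive `2 × 2` minors: `𝓛(W)_{i,j} = w_{i,j} w_{i+1,j+1} - w_{i,j+1} w_{i+1,j}`. -/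
def consecMinors {m n : ℕ} (W : Matrix (Fin (m + 1)) (Fin (n + 1)) ℝ) :
    Matrix (Fin m) (Fin n) ℝ :=
  Matrix.of fun i j =>
    W i.castSucc j.castSucc * W i.succ j.succ - W i.castSucc j.succ * W i.succ j.castSucc

namespace ConsecMinorsAux

open Matrix

lemma sm_one {α : Type*} [Preorder α] (f : Fin 1 → α) : StrictMono f :=
  fun i j h => absurd (Subsingleton.elim i j) (ne_of_lt h)

lemma sm_two {α : Type*} [Preorder α] {a b : α} (h : a < b) : StrictMono ![a, b] := by
  intro i j hij
  fin_cases i <;> fin_cases j <;>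
    first
      | exact absurd hij (by decide)
      | simpa using h

lemma sm_three {α : Type*} [Preorder α] {a b c : α} (hab : a < b) (hbc : b < c) :
    StrictMono ![a, b, c] := by
  intro i j hij
  fin_cases i <;> fin_cases j <;>
    first
      | exact absurd hij (by decide)
      | simpa using hab
      | simpa using hbc
      | simpa using hab.trans hbc

variable {p q : ℕ} {W : Matrix (Fin p) (Fin q) ℝ}

lemma entry_nonneg (hW : IsTotallyNonneg W) (r : Fin p) (c : Fin q) : 0 ≤ W r c := by
  have h := hW 1 (fun _ => r) (fun _ => c) (sm_one _) (sm_one _)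
  rw [Matrix.det_fin_one] at h
  simpa using h

lemma minor2 (hW : IsTotallyNonneg W) {r0 r1 : Fin p} {c0 c1 : Fin q}
    (hr : r0 < r1) (hc : c0 < c1) :
    0 ≤ W r0 c0 * W r1 c1 - W r0 c1 * W r1 c0 := by
  have h := hW 2 ![r0, r1] ![c0, c1] (sm_two hr) (sm_two hc)
  rw [Matrix.det_fin_two] at h
  simp only [Matrix.submatrix_apply, Matrix.cons_val_zero, Matrix.cons_val_one,
    Matrix.head_cons] at h
  linarith [h]

lemma minor3 (hW : IsTotallyNonneg W) {r0 r1 r2 : Fin p} {c0 c1 c2 : Fin q}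
    (h01 : r0 < r1) (h12 : r1 < r2) (k01 : c0 < c1) (k12 : c1 < c2) :
    0 ≤ W r0 c0 * W r1 c1 * W r2 c2 - W r0 c0 * W r1 c2 * W r2 c1
      - W r0 c1 * W r1 c0 * W r2 c2 + W r0 c1 * W r1 c2 * W r2 c0
      + W r0 c2 * W r1 c0 * W r2 c1 - W r0 c2 * W r1 c1 * W r2 c0 := by
  have h := hW 3 ![r0, r1, r2] ![c0, c1, c2] (sm_three h01 h12) (sm_three k01 k12)
  rw [Matrix.det_fin_three] at h
  simp only [Matrix.submatrix_apply, Matrix.cons_val_zero, Matrix.cons_val_one,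
    Matrix.head_cons, Matrix.cons_val_two, Matrix.tail_cons] at h
  linarith [h]

/-- Core algebraic lemma for the "adjacent rows" case: for a `3 × 4` totally nonnegative
configuration, `m(01|01) m(12|23) ≥ m(01|23) m(12|01)`. -/
private lemma core_adjDis
    (a00 a01 a02 a03 a10 a11 a12 a13 a20 a21 a22 a23 : ℝ)
    (e02 : 0 ≤ a02) (e10 : 0 ≤ a10) (e11 : 0 ≤ a11) (e12 : 0 ≤ a12)
    (e20 : 0 ≤ a20) (e21 : 0 ≤ a21) (e22 : 0 ≤ a22)
    (m0101 : 0 ≤ a00 * a11 - a01 * a10)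
    (m1201 : 0 ≤ a10 * a21 - a11 * a20)
    (m1223 : 0 ≤ a12 * a23 - a13 * a22)
    (m1212 : 0 ≤ a11 * a22 - a12 * a21)
    (m0212 : 0 ≤ a01 * a22 - a02 * a21)
    (m0223 : 0 ≤ a02 * a23 - a03 * a22)
    (m0123 : 0 ≤ a02 * a13 - a03 * a12)
    (d012 : 0 ≤ a00 * a11 * a22 - a00 * a12 * a21 - a01 * a10 * a22 + a01 * a12 * a20
      + a02 * a10 * a21 - a02 * a11 * a20)
    (d123 : 0 ≤ a01 * a12 * a23 - a01 * a13 * a22 - a02 * a11 * a23 + a02 * a13 * a21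
      + a03 * a11 * a22 - a03 * a12 * a21)
    (d013 : 0 ≤ a00 * a11 * a23 - a00 * a13 * a21 - a01 * a10 * a23 + a01 * a13 * a20
      + a03 * a10 * a21 - a03 * a11 * a20) :
    0 ≤ (a00 * a11 - a01 * a10) * (a12 * a23 - a13 * a22)
      - (a02 * a13 - a03 * a12) * (a10 * a21 - a11 * a20) := by
  rcases eq_or_lt_of_le m1201 with hEC | hEC
  · -- m(12|01) = 0 : trivial
    have hz : (a02 * a13 - a03 * a12) * (a10 * a21 - a11 * a20) = 0 := by
      rw [← hEC, mul_zero]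
    linarith [mul_nonneg m0101 m1223]
  · rcases eq_or_lt_of_le m1212 with h12 | h12
    · rcases eq_or_lt_of_le m0212 with h02 | h02
      · -- both middle-column minors vanish: degenerate (proportional columns) case
        have ha21 : 0 < a21 := by nlinarith [hEC, e10, e11, e20]
        have h02e : a01 * a22 - a02 * a21 = 0 := h02.symm
        have h12e : a11 * a22 - a12 * a21 = 0 := h12.symm
        have key : a21 * ((a00 * a11 - a01 * a10) * (a12 * a23 - a13 * a22)
              - (a02 * a13 - a03 * a12) * (a10 * a21 - a11 * a20))
            = a11 * a22 * (a00 * a11 * a23 - a00 * a13 * a21 - a01 * a10 * a23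
              + a01 * a13 * a20 + a03 * a10 * a21 - a03 * a11 * a20) := by
          linear_combination (a13 * (a10 * a21 - a11 * a20)) * h02e
            - (a23 * (a00 * a11 - a01 * a10) + a03 * (a10 * a21 - a11 * a20)) * h12e
        have hR : 0 ≤ a21 * ((a00 * a11 - a01 * a10) * (a12 * a23 - a13 * a22)
            - (a02 * a13 - a03 * a12) * (a10 * a21 - a11 * a20)) := by
          rw [key]; exact mul_nonneg (mul_nonneg e11 e22) d013
        exact le_of_mul_le_mul_left (by rwa [mul_zero]) ha21
      · -- certificate with multiplier m(02|12)
        have key : (a01 * a22 - a02 * a21) * ((a00 * a11 - a01 * a10) * (a12 * a23 - a13 * a22)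
              - (a02 * a13 - a03 * a12) * (a10 * a21 - a11 * a20))
            = a02 * (a01 * a12 * a23 - a01 * a13 * a22 - a02 * a11 * a23 + a02 * a13 * a21
                + a03 * a11 * a22 - a03 * a12 * a21) * (a10 * a21 - a11 * a20)
              + (a00 * a11 - a01 * a10) * (a01 * a12 * a23 - a01 * a13 * a22
                - a02 * a11 * a23 + a02 * a13 * a21 + a03 * a11 * a22 - a03 * a12 * a21) * a22
              + (a00 * a11 * a22 - a00 * a12 * a21 - a01 * a10 * a22 + a01 * a12 * a20
                + a02 * a10 * a21 - a02 * a11 * a20) * (a02 * a23 - a03 * a22) * a11 := by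
          ring
        have hR : 0 ≤ (a01 * a22 - a02 * a21) * ((a00 * a11 - a01 * a10) * (a12 * a23 - a13 * a22)
            - (a02 * a13 - a03 * a12) * (a10 * a21 - a11 * a20)) := by
          rw [key]
          exact add_nonneg (add_nonneg (mul_nonneg (mul_nonneg e02 d123) hEC.le)
            (mul_nonneg (mul_nonneg m0101 d123) e22)) (mul_nonneg (mul_nonneg d012 m0223) e11)
        exact le_of_mul_le_mul_left (by rwa [mul_zero]) h02
    · -- certificate with multiplier m(12|12)
      have key : (a11 * a22 - a12 * a21) * ((a00 * a11 - a01 * a10) * (a12 * a23 - a13 * a22)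
            - (a02 * a13 - a03 * a12) * (a10 * a21 - a11 * a20))
          = (a00 * a11 * a22 - a00 * a12 * a21 - a01 * a10 * a22 + a01 * a12 * a20
              + a02 * a10 * a21 - a02 * a11 * a20) * a11 * (a12 * a23 - a13 * a22)
            + (a01 * a12 * a23 - a01 * a13 * a22 - a02 * a11 * a23 + a02 * a13 * a21
              + a03 * a11 * a22 - a03 * a12 * a21) * a12 * (a10 * a21 - a11 * a20) := by
        ring
      have hR : 0 ≤ (a11 * a22 - a12 * a21) * ((a00 * a11 - a01 * a10) * (a12 * a23 - a13 * a22)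
          - (a02 * a13 - a03 * a12) * (a10 * a21 - a11 * a20)) := by
        rw [key]
        exact add_nonneg (mul_nonneg (mul_nonneg d012 e11) m1223)
          (mul_nonneg (mul_nonneg d123 e12) hEC.le)
      exact le_of_mul_le_mul_left (by rwa [mul_zero]) h12

/-- Adjacent-rows case: rows `r0 < r1 < r2`, columns `c0 < c1 < c2 < c3`. -/
lemma adjDis (hW : IsTotallyNonneg W) {r0 r1 r2 : Fin p} {c0 c1 c2 c3 : Fin q}
    (h01 : r0 < r1) (h12 : r1 < r2) (k01 : c0 < c1) (k12 : c1 < c2) (k23 : c2 < c3) :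
    0 ≤ (W r0 c0 * W r1 c1 - W r0 c1 * W r1 c0) * (W r1 c2 * W r2 c3 - W r1 c3 * W r2 c2)
      - (W r0 c2 * W r1 c3 - W r0 c3 * W r1 c2) * (W r1 c0 * W r2 c1 - W r1 c1 * W r2 c0) :=
  core_adjDis (W r0 c0) (W r0 c1) (W r0 c2) (W r0 c3) (W r1 c0) (W r1 c1) (W r1 c2)
    (W r1 c3) (W r2 c0) (W r2 c1) (W r2 c2) (W r2 c3)
    (entry_nonneg hW r0 c2) (entry_nonneg hW r1 c0) (entry_nonneg hW r1 c1)
    (entry_nonneg hW r1 c2) (entry_nonneg hW r2 c0) (entry_nonneg hW r2 c1)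
    (entry_nonneg hW r2 c2)
    (minor2 hW h01 k01) (minor2 hW h12 k01) (minor2 hW h12 k23)
    (minor2 hW h12 k12) (minor2 hW (h01.trans h12) k12)
    (minor2 hW (h01.trans h12) k23) (minor2 hW h01 k23)
    (minor3 hW h01 h12 k01 k12) (minor3 hW h01 h12 k12 k23)
    (minor3 hW h01 h12 k01 (k12.trans k23))

lemma tn_transpose (hW : IsTotallyNonneg W) : IsTotallyNonneg Wᵀ := by
  intro k r c hr hc
  have h := hW k c r hc hr
  rwa [← Matrix.det_transpose, Matrix.transpose_submatrix] at h

/-- Adjacent-columns case: rows `r0 < r1 < r2 < r3`, columns `c0 < c1 < c2`. -/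
lemma disAdj (hW : IsTotallyNonneg W) {r0 r1 r2 r3 : Fin p} {c0 c1 c2 : Fin q}
    (h01 : r0 < r1) (h12 : r1 < r2) (h23 : r2 < r3) (k01 : c0 < c1) (k12 : c1 < c2) :
    0 ≤ (W r0 c0 * W r1 c1 - W r0 c1 * W r1 c0) * (W r2 c1 * W r3 c2 - W r2 c2 * W r3 c1)
      - (W r0 c1 * W r1 c2 - W r0 c2 * W r1 c1) * (W r2 c0 * W r3 c1 - W r2 c1 * W r3 c0) := by
  have h := adjDis (tn_transpose hW) k01 k12 h01 h12 h23
  simp only [Matrix.transpose_apply] at h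
  linarith [h]

/-- Desnanot–Jacobi (adjacent rows and adjacent columns) case. -/
lemma adjAdj (hW : IsTotallyNonneg W) {r0 r1 r2 : Fin p} {c0 c1 c2 : Fin q}
    (h01 : r0 < r1) (h12 : r1 < r2) (k01 : c0 < c1) (k12 : c1 < c2) :
    0 ≤ (W r0 c0 * W r1 c1 - W r0 c1 * W r1 c0) * (W r1 c1 * W r2 c2 - W r1 c2 * W r2 c1)
      - (W r0 c1 * W r1 c2 - W r0 c2 * W r1 c1) * (W r1 c0 * W r2 c1 - W r1 c1 * W r2 c0) := by
  linarith [mul_nonneg (entry_nonneg hW r1 c1) (minor3 hW h01 h12 k01 k12)]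

private lemma pos_aux1 {a b : ℝ} (h : 0 < a * b) (hb : 0 ≤ b) : 0 < a := by
  rcases lt_or_ge 0 a with ha | ha
  · exact ha
  · exfalso; nlinarith

private lemma pos_aux2 {a b : ℝ} (h : 0 < a * b) (ha : 0 ≤ a) : 0 < b := by
  rcases lt_or_ge 0 b with hb | hb
  · exact hb
  · exfalso; nlinarith

/-- Fully disjoint case: rows `r0 < r1 < r2 < r3`, columns `c0 < c1 < c2 < c3`. -/
lemma disDis (hW : IsTotallyNonneg W) {r0 r1 r2 r3 : Fin p} {c0 c1 c2 c3 : Fin q}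
    (h01 : r0 < r1) (h12 : r1 < r2) (h23 : r2 < r3)
    (k01 : c0 < c1) (k12 : c1 < c2) (k23 : c2 < c3) :
    0 ≤ (W r0 c0 * W r1 c1 - W r0 c1 * W r1 c0) * (W r2 c2 * W r3 c3 - W r2 c3 * W r3 c2)
      - (W r0 c2 * W r1 c3 - W r0 c3 * W r1 c2) * (W r2 c0 * W r3 c1 - W r2 c1 * W r3 c0) := by
  have e02 := entry_nonneg hW r0 c2
  have e03 := entry_nonneg hW r0 c3
  have e12 := entry_nonneg hW r1 c2
  have e20 := entry_nonneg hW r2 c0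
  have e21 := entry_nonneg hW r2 c1
  have e30 := entry_nonneg hW r3 c0
  have e31 := entry_nonneg hW r3 c1
  have e33 := entry_nonneg hW r3 c3
  have hAC := minor2 hW h01 k01
  have hAD := minor2 hW h01 k23
  have hBC := minor2 hW h23 k01
  have hBD := minor2 hW h23 k23
  have hEC := minor2 hW h12 k01
  have hED := minor2 hW h12 k23
  have hFC := minor2 hW (h12.trans h23) k01
  have hFD := minor2 hW (h12.trans h23) k23
  have h1313 := minor2 hW (h12.trans h23) (k12.trans k23)
  rcases eq_or_lt_of_le hAD with hADz | hADpos
  · have hz : (W r0 c2 * W r1 c3 - W r0 c3 * W r1 c2)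
        * (W r2 c0 * W r3 c1 - W r2 c1 * W r3 c0) = 0 := by rw [← hADz, zero_mul]
    linarith [mul_nonneg hAC hBD]
  rcases eq_or_lt_of_le hBC with hBCz | hBCpos
  · have hz : (W r0 c2 * W r1 c3 - W r0 c3 * W r1 c2)
        * (W r2 c0 * W r3 c1 - W r2 c1 * W r3 c0) = 0 := by rw [← hBCz, mul_zero]
    linarith [mul_nonneg hAC hBD]
  have p1 : 0 < W r0 c2 * W r1 c3 := by linarith [mul_nonneg e03 e12]
  have h13pos : 0 < W r1 c3 := pos_aux2 p1 e02
  have p2 : 0 < W r2 c0 * W r3 c1 := by linarith [mul_nonneg e21 e30]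
  have h20pos : 0 < W r2 c0 := pos_aux1 p2 e31
  have h31pos : 0 < W r3 c1 := pos_aux2 p2 e20
  have p3 : 0 < W r1 c1 * W r3 c3 := by linarith [mul_pos h13pos h31pos]
  have h11pos : 0 < W r1 c1 := pos_aux1 p3 e33
  rcases eq_or_lt_of_le hEC with hECz | hECpos
  · -- middle pair vanishes on C, hence also on D; degenerate case
    have hii := adjDis hW h12 h23 k01 k12 k23
    have hB := adjDis hW h01 (h12.trans h23) k01 k12 k23
    have hdetC := minor3 hW h12 h23 (k01.trans k12) k23
    have hq : (W r1 c0 * W r2 c1 - W r1 c1 * W r2 c0)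
        * (W r2 c2 * W r3 c3 - W r2 c3 * W r3 c2) = 0 := by rw [← hECz, zero_mul]
    have hle : W r1 c2 * W r2 c3 - W r1 c3 * W r2 c2 ≤ 0 := by
      have hmm : (W r1 c2 * W r2 c3 - W r1 c3 * W r2 c2)
            * (W r2 c0 * W r3 c1 - W r2 c1 * W r3 c0)
          ≤ 0 * (W r2 c0 * W r3 c1 - W r2 c1 * W r3 c0) := by
        rw [zero_mul]; linarith [hii, hq]
      exact le_of_mul_le_mul_right hmm hBCpos
    have hEDz : W r1 c2 * W r2 c3 - W r1 c3 * W r2 c2 = 0 := le_antisymm hle hED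
    have p4 : 0 < W r1 c0 * W r2 c1 := by linarith [mul_pos h11pos h20pos]
    have h10pos : 0 < W r1 c0 := pos_aux1 p4 e21
    have stepA : W r1 c0 * (W r2 c0 * W r3 c1 - W r2 c1 * W r3 c0)
        = W r2 c0 * (W r1 c0 * W r3 c1 - W r1 c1 * W r3 c0) := by
      linear_combination (-(W r3 c0)) * hECz.symm
    have hprod : W r3 c0 * (W r1 c2 * W r2 c3 - W r1 c3 * W r2 c2) = 0 := by
      rw [hEDz, mul_zero]
    have stepC : W r2 c0 * (W r1 c2 * W r3 c3 - W r1 c3 * W r3 c2)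
        ≤ W r1 c0 * (W r2 c2 * W r3 c3 - W r2 c3 * W r3 c2) := by
      linarith [hdetC, hprod]
    have h4 := mul_le_mul_of_nonneg_left stepC hAC
    have h3 := mul_nonneg e20 hB
    have stepA' : (W r0 c2 * W r1 c3 - W r0 c3 * W r1 c2)
          * (W r1 c0 * (W r2 c0 * W r3 c1 - W r2 c1 * W r3 c0))
        = (W r0 c2 * W r1 c3 - W r0 c3 * W r1 c2)
          * (W r2 c0 * (W r1 c0 * W r3 c1 - W r1 c1 * W r3 c0)) := by rw [stepA]
    have h5 : 0 ≤ W r1 c0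
        * ((W r0 c0 * W r1 c1 - W r0 c1 * W r1 c0) * (W r2 c2 * W r3 c3 - W r2 c3 * W r3 c2)
          - (W r0 c2 * W r1 c3 - W r0 c3 * W r1 c2)
            * (W r2 c0 * W r3 c1 - W r2 c1 * W r3 c0)) := by
      linarith [h4, h3, stepA']
    exact le_of_mul_le_mul_left (by rwa [mul_zero]) h10pos
  rcases eq_or_lt_of_le hED with hEDz | hEDpos
  · -- impossible: middle pair vanishes on D but not on C
    exfalso
    have hi := adjDis hW h01 h12 k01 k12 k23
    have hp : (W r0 c0 * W r1 c1 - W r0 c1 * W r1 c0)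
        * (W r1 c2 * W r2 c3 - W r1 c3 * W r2 c2) = 0 := by rw [← hEDz, mul_zero]
    linarith [hi, hp, mul_pos hADpos hECpos]
  · -- chain through the middle row pair
    have hi := adjDis hW h01 h12 k01 k12 k23
    have hii := adjDis hW h12 h23 k01 k12 k23
    have t1 : (W r0 c2 * W r1 c3 - W r0 c3 * W r1 c2)
          * (W r1 c0 * W r2 c1 - W r1 c1 * W r2 c0)
        ≤ (W r0 c0 * W r1 c1 - W r0 c1 * W r1 c0)
          * (W r1 c2 * W r2 c3 - W r1 c3 * W r2 c2) := by linarith [hi]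
    have t2 : (W r1 c2 * W r2 c3 - W r1 c3 * W r2 c2)
          * (W r2 c0 * W r3 c1 - W r2 c1 * W r3 c0)
        ≤ (W r1 c0 * W r2 c1 - W r1 c1 * W r2 c0)
          * (W r2 c2 * W r3 c3 - W r2 c3 * W r3 c2) := by linarith [hii]
    have hmul := mul_le_mul t1 t2 (mul_nonneg hED hBC) (mul_nonneg hAC hED)
    have hX : 0 < (W r1 c0 * W r2 c1 - W r1 c1 * W r2 c0)
        * (W r1 c2 * W r2 c3 - W r1 c3 * W r2 c2) := mul_pos hECpos hEDpos
    have hR : 0 ≤ ((W r1 c0 * W r2 c1 - W r1 c1 * W r2 c0)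
          * (W r1 c2 * W r2 c3 - W r1 c3 * W r2 c2))
        * ((W r0 c0 * W r1 c1 - W r0 c1 * W r1 c0) * (W r2 c2 * W r3 c3 - W r2 c3 * W r3 c2)
          - (W r0 c2 * W r1 c3 - W r0 c3 * W r1 c2)
            * (W r2 c0 * W r3 c1 - W r2 c1 * W r3 c0)) := by linarith [hmul]
    exact le_of_mul_le_mul_left (by rwa [mul_zero]) hX

end ConsecMinorsAux

open ConsecMinorsAux in
/-- Every `2 × 2` minor of the matrix `𝓛(W)` of consecutive `2 × 2` minors of a
totally nonnegative matrix `W` (with at least two rows and two columns) is nonnegative. -/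
theorem consecMinors_two_by_two_minors_nonneg
    {m n : ℕ} (W : Matrix (Fin (m + 2)) (Fin (n + 2)) ℝ) (hW : IsTotallyNonneg W)
    (i₁ i₂ : Fin (m + 1)) (j₁ j₂ : Fin (n + 1)) (hi : i₁ < i₂) (hj : j₁ < j₂) :
    0 ≤ consecMinors W i₁ j₁ * consecMinors W i₂ j₂ -
        consecMinors W i₁ j₂ * consecMinors W i₂ j₁ := by
  simp only [consecMinors, Matrix.of_apply]
  have hr1 : i₁.castSucc < i₁.succ := Fin.castSucc_lt_succ
  have hr2 : i₂.castSucc < i₂.succ := Fin.castSucc_lt_succ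
  have hc1 : j₁.castSucc < j₁.succ := Fin.castSucc_lt_succ
  have hc2 : j₂.castSucc < j₂.succ := Fin.castSucc_lt_succ
  have hrm : i₁.succ ≤ i₂.castSucc := by
    rw [Fin.le_def]
    have : (i₁ : ℕ) < i₂ := hi
    simp only [Fin.val_succ, Fin.coe_castSucc]
    omega
  have hcm : j₁.succ ≤ j₂.castSucc := by
    rw [Fin.le_def]
    have : (j₁ : ℕ) < j₂ := hj
    simp only [Fin.val_succ, Fin.coe_castSucc]
    omega
  have hrs : i₁.succ < i₂.succ := Fin.succ_lt_succ_iff.mpr hi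
  have hcs : j₁.succ < j₂.succ := Fin.succ_lt_succ_iff.mpr hj
  rcases eq_or_lt_of_le hrm with hre | hrl <;> rcases eq_or_lt_of_le hcm with hce | hcl
  · rw [← hre, ← hce]
    exact adjAdj hW hr1 hrs hc1 hcs
  · rw [← hre]
    exact adjDis hW hr1 hrs hc1 hcl hc2
  · rw [← hce]
    exact disAdj hW hr1 hrl hr2 hc1 hcs
  · exact disDis hW hr1 hrl hr2 hc1 hcl hc2
end

section
/- Let $W$ be a totally nonnegative $m \times n$ real matrix with $m,n \geq 3$. Then every entry of $\mathcal{L}(\mathcal{L}(W))$ is nonnegative, where $\mathcal{L}$ is the operator sending a matrix to its matrix of consecutive $2\times 2$ minors. -/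
/-- If `W` is a totally nonnegative matrix with at least three rows and three columns,
then every entry of `𝓛(𝓛(W))` is nonnegative. -/
theorem consecMinors_iterated_twice_entries_nonneg
    {m n : ℕ} (W : Matrix (Fin (m + 3)) (Fin (n + 3)) ℝ) (hW : IsTotallyNonneg W)
    (i : Fin (m + 1)) (j : Fin (n + 1)) :
    0 ≤ consecMinors (consecMinors W) i j := by
  set r : Fin 3 → Fin (m + 3) := fun t => ⟨i + t, by omega⟩ with hrdef
  set c : Fin 3 → Fin (n + 3) := fun t => ⟨j + t, by omega⟩ with hcdef
  have hr : StrictMono r := fun a b h => by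
    simp only [hrdef, Fin.mk_lt_mk]
    have := Fin.lt_def.mp h; omega
  have hc : StrictMono c := fun a b h => by
    simp only [hcdef, Fin.mk_lt_mk]
    have := Fin.lt_def.mp h; omega
  have h3 : 0 ≤ (W.submatrix r c).det := hW 3 r c hr hc
  have h1 : 0 ≤ W (r 1) (c 1) := by
    have := hW 1 (fun _ => r 1) (fun _ => c 1)
      (Subsingleton.strictMono _) (Subsingleton.strictMono _)
    simpa [Matrix.det_fin_one] using this
  have key : consecMinors (consecMinors W) i j = W (r 1) (c 1) * (W.submatrix r c).det := by
    have e0 : ∀ a : Fin (m+1), (a.castSucc.castSucc : Fin (m+3)) = ⟨a + (0:Fin 3), by omega⟩ := by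
      intro a; apply Fin.ext; simp
    have e1 : ∀ a : Fin (m+1), (a.castSucc.succ : Fin (m+3)) = ⟨a + (1:Fin 3), by omega⟩ := by
      intro a; apply Fin.ext; simp
    have e1' : ∀ a : Fin (m+1), (a.succ.castSucc : Fin (m+3)) = ⟨a + (1:Fin 3), by omega⟩ := by
      intro a; apply Fin.ext; simp
    have e2 : ∀ a : Fin (m+1), (a.succ.succ : Fin (m+3)) = ⟨a + (2:Fin 3), by omega⟩ := by
      intro a; apply Fin.ext; simp
    have f0 : ∀ a : Fin (n+1), (a.castSucc.castSucc : Fin (n+3)) = ⟨a + (0:Fin 3), by omega⟩ := by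
      intro a; apply Fin.ext; simp
    have f1 : ∀ a : Fin (n+1), (a.castSucc.succ : Fin (n+3)) = ⟨a + (1:Fin 3), by omega⟩ := by
      intro a; apply Fin.ext; simp
    have f1' : ∀ a : Fin (n+1), (a.succ.castSucc : Fin (n+3)) = ⟨a + (1:Fin 3), by omega⟩ := by
      intro a; apply Fin.ext; simp
    have f2 : ∀ a : Fin (n+1), (a.succ.succ : Fin (n+3)) = ⟨a + (2:Fin 3), by omega⟩ := by
      intro a; apply Fin.ext; simp
    simp only [consecMinors, Matrix.of_apply, Matrix.det_fin_three, Matrix.submatrix_apply,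
      hrdef, hcdef, e0, e1, e1', e2, f0, f1, f1', f2]
    ring
  rw [key]
  exact mul_nonneg h1 h3
end

section
/- Let $W$ be the $6\times 6$ real matrix $\begin{pmatrix} 1&1&1&0&0&0\\ 1&1&1&0&0&0\\ 0&1&1&0&0&0\\ 0&0&0&1&1&0\\ 0&0&0&1&1&1\\ 0&0&0&1&1&1 \end{pmatrix}$ and let $T$ be its $(A,B)$-minor matrix with $A = B = \{0,3\}$, so $T$ is the $3\times 3$ matrix with entries $t_{i,j} = \det W[\{i, i+3\}, \{j, j+3\}]$ for $0 \le i,j \le 2$ (rows and columns of $W$ indexed from $0$). Then $T = \begin{pmatrix} 1&1&0\\ 1&1&1\\ 0&1&1 \end{pmatrix}$ and $\det T = -1$. In particular, the minor matrix of a totally nonnegative matrix need not be totally nonnegative. -/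
/-- The integer version of the matrix `W`. -/
def Wz : Matrix (Fin 6) (Fin 6) ℤ :=
  !![1,1,1,0,0,0; 1,1,1,0,0,0; 0,1,1,0,0,0; 0,0,0,1,1,0; 0,0,0,1,1,1; 0,0,0,1,1,1]

/-- Kernel-computable Laplace expansion of the minor of `W` with given row/column lists. -/
def detOn (W : Matrix (Fin 6) (Fin 6) ℤ) : List (Fin 6) → List (Fin 6) → ℤ
  | [], _ => 1
  | r :: rs, cols =>
      ((List.range cols.length).map fun j =>
        (if j % 2 = 0 then (1:ℤ) else -1) * W r (cols.getD j 0) * detOn W rs (cols.eraseIdx j)).sum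

lemma eraseIdx_ofFn {α : Type*} {k : ℕ} (f : Fin (k+1) → α) (j : Fin (k+1)) :
    (List.ofFn f).eraseIdx (j : ℕ) = List.ofFn (f ∘ j.succAbove) := by
  apply List.ext_getElem
  · simp [List.length_eraseIdx, j.isLt]
  · intro i h1 h2
    rw [List.getElem_eraseIdx, List.getElem_ofFn (f := f ∘ j.succAbove)]
    simp only [List.length_ofFn] at h2
    split
    · rename_i h'
      rw [List.getElem_ofFn]
      have : j.succAbove ⟨i, h2⟩ = ⟨i, by omega⟩ := by
        rw [Fin.succAbove_of_castSucc_lt _ _ (by simpa [Fin.lt_def])]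
        exact Fin.ext rfl
      rw [Function.comp_apply, this]
    · rename_i h'
      rw [List.getElem_ofFn]
      have : j.succAbove ⟨i, h2⟩ = ⟨i + 1, by omega⟩ := by
        rw [Fin.succAbove_of_le_castSucc _ _ (by simp [Fin.le_def]; omega)]
        exact Fin.ext rfl
      rw [Function.comp_apply, this]

lemma list_sum_map_range (n : ℕ) (f : ℕ → ℤ) :
    ((List.range n).map f).sum = ∑ i ∈ Finset.range n, f i := by
  induction n with
  | zero => simp
  | succ n ih => simp [List.range_succ, Finset.sum_range_succ, ih]

lemma detOn_ofFn (W : Matrix (Fin 6) (Fin 6) ℤ) :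
    ∀ {k : ℕ} (r c : Fin k → Fin 6),
      detOn W (List.ofFn r) (List.ofFn c) = (W.submatrix r c).det
  | 0, r, c => by simp [detOn, Matrix.det_fin_zero]
  | (k+1), r, c => by
      rw [Matrix.det_succ_row_zero, List.ofFn_succ]
      show ((List.range (List.ofFn c).length).map fun j =>
          (if j % 2 = 0 then (1:ℤ) else -1) * W (r 0) ((List.ofFn c).getD j 0) *
            detOn W (List.ofFn fun i => r i.succ) ((List.ofFn c).eraseIdx j)).sum = _
      rw [List.length_ofFn, list_sum_map_range, Finset.sum_range]
      refine Finset.sum_congr rfl fun j _ => ?_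
      have hj : (j : ℕ) < (List.ofFn c).length := by simp [j.isLt]
      have hcast : (⟨(j : ℕ), j.isLt⟩ : Fin (k+1)) = j := Fin.ext rfl
      have hsign : (if (j : ℕ) % 2 = 0 then (1:ℤ) else -1) = (-1)^(j:ℕ) := by
        rcases Nat.even_or_odd (j : ℕ) with h | h
        · rw [Even.neg_one_pow h, if_pos (Nat.even_iff.mp h)]
        · rw [Odd.neg_one_pow h, if_neg (by simpa [Nat.odd_iff] using h)]
      have := eraseIdx_ofFn c ⟨(j : ℕ), j.isLt⟩
      rw [hcast] at this
      rw [List.getD_eq_getElem _ _ hj, List.getElem_ofFn, this,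
        detOn_ofFn W (fun i => r i.succ) (c ∘ j.succAbove),
        Matrix.submatrix_submatrix, hsign]
      simp only [hcast, Matrix.submatrix_apply, Function.comp]
      rfl

set_option maxHeartbeats 4000000 in
set_option maxRecDepth 100000 in
/-- Every minor of `Wz` (with sorted row/column lists) is nonnegative, by enumeration. -/
lemma keyL : ∀ l1 ∈ (List.finRange 6).sublists, ∀ l2 ∈ (List.finRange 6).sublists,
    l1.length = l2.length → 0 ≤ detOn Wz l1 l2 := by decide

lemma Wz_minor_nonneg {k : ℕ} (r c : Fin k → Fin 6) (hr : StrictMono r) (hc : StrictMono c) :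
    0 ≤ (Wz.submatrix r c).det := by
  rw [← detOn_ofFn Wz r c]
  have mem : ∀ (f : Fin k → Fin 6), StrictMono f →
      List.ofFn f ∈ (List.finRange 6).sublists := by
    intro f hf
    rw [List.mem_sublists]
    apply List.sublist_of_subperm_of_pairwise (r := (· ≤ ·))
    · exact List.subperm_of_subset (List.nodup_ofFn.mpr hf.injective)
        (fun x _ => List.mem_finRange x)
    · exact List.pairwise_ofFn.mpr fun i j hij => (hf hij).le
    · exact List.pairwise_le_finRange 6
  exact keyL _ (mem r hr) _ (mem c hc) (by simp)

lemma cons_val_five {α : Type*} {m : ℕ} (x : α) (u : Fin (m+5) → α) :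
    Matrix.vecCons x u 5 =
      Matrix.vecHead (Matrix.vecTail (Matrix.vecTail (Matrix.vecTail (Matrix.vecTail u)))) :=
  rfl

/-- For the explicit totally nonnegative `6 × 6` matrix `W` of Example
`Order6CounterExample` and `A = B = {0, 3}`, the `(A,B)`-minor matrix
`T`, with `t_{i,j} = det W[{i, i+3}, {j, j+3}]` for `0 ≤ i, j ≤ 2`, equals
`!![1,1,0; 1,1,1; 0,1,1]` and has determinant `-1`; in particular `W` is totally
nonnegative while its minor matrix `T` is not. -/
theorem example_minor_matrix_not_totallyNonneg
    (W : Matrix (Fin 6) (Fin 6) ℝ)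
    (hWdef : W = !![(1:ℝ),1,1,0,0,0;
                    1,1,1,0,0,0;
                    0,1,1,0,0,0;
                    0,0,0,1,1,0;
                    0,0,0,1,1,1;
                    0,0,0,1,1,1])
    (T : Matrix (Fin 3) (Fin 3) ℝ)
    (hTdef : T = Matrix.of fun i j : Fin 3 =>
      (Matrix.of fun p q : Fin 2 =>
        W ⟨(i : ℕ) + 3 * (p : ℕ), by have := i.isLt; have := p.isLt; omega⟩
          ⟨(j : ℕ) + 3 * (q : ℕ), by have := j.isLt; have := q.isLt; omega⟩).det) :
    T = !![(1:ℝ),1,0; 1,1,1; 0,1,1] ∧ T.det = -1 ∧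
      IsTotallyNonneg W ∧ ¬ IsTotallyNonneg T := by
  have hT : T = !![(1:ℝ),1,0; 1,1,1; 0,1,1] := by
    subst hWdef hTdef
    ext i j
    fin_cases i <;> fin_cases j <;>
      (norm_num [Matrix.det_fin_two, Matrix.of_apply, Matrix.vecHead, Matrix.vecTail,
        Function.comp]; try rfl)
  have hdet : T.det = -1 := by
    rw [hT, Matrix.det_fin_three]
    norm_num [Matrix.vecHead, Matrix.vecTail, Function.comp, Matrix.cons_val_two]
  refine ⟨hT, hdet, ?_, ?_⟩
  · intro k r c hr hc
    have hW : W = Wz.map (Int.cast : ℤ → ℝ) := by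
      subst hWdef
      ext i j
      fin_cases i <;> fin_cases j <;>
        norm_num [Wz, cons_val_five, Matrix.vecHead, Matrix.vecTail, Function.comp]
    rw [hW, show (Wz.map (Int.cast : ℤ → ℝ)).submatrix r c
        = (Int.castRingHom ℝ).mapMatrix (Wz.submatrix r c) from rfl,
      ← RingHom.map_det]
    show (0:ℝ) ≤ (((Wz.submatrix r c).det : ℤ) : ℝ)
    exact_mod_cast Wz_minor_nonneg r c hr hc
  · intro h
    have := h 3 id id strictMono_id strictMono_id
    rw [Matrix.submatrix_id_id, hdet] at this
    norm_num at this
end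

section
/- There exists a totally nonnegative square real matrix $A$ such that $\mathcal{L}(A)$, the matrix of consecutive $2\times 2$ minors of $A$, is not totally nonnegative (i.e., some minor of $\mathcal{L}(A)$ is strictly negative). -/
set_option maxRecDepth 40000
set_option synthInstance.maxSize 1000
set_option synthInstance.maxHeartbeats 1000000
set_option maxHeartbeats 1000000

namespace LCounterexample

def B : Matrix (Fin 5) (Fin 5) ℤ :=
  !![1,1,0,0,0; 5,8,16,8,0; 5,9,23,12,0; 0,2,23,17,4; 0,0,2,2,1]

def A : Matrix (Fin 5) (Fin 5) ℝ := B.map (Int.cast)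

def Lz : Matrix (Fin 4) (Fin 4) ℤ :=
  Matrix.of fun i j =>
    B i.castSucc j.castSucc * B i.succ j.succ - B i.castSucc j.succ * B i.succ j.castSucc

lemma key1 : ∀ a a' : Fin 5, 0 ≤ (B.submatrix ![a] ![a']).det := by decide

lemma key2 : ∀ a b : Fin 5, a < b → ∀ a' b' : Fin 5, a' < b' →
    0 ≤ (B.submatrix ![a,b] ![a',b']).det := by decide

lemma key3 : ∀ a b : Fin 5, a < b → ∀ c : Fin 5, b < c →
    ∀ a' b' : Fin 5, a' < b' → ∀ c' : Fin 5, b' < c' →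
    0 ≤ (B.submatrix ![a,b,c] ![a',b',c']).det := by decide

lemma key4 : ∀ a b : Fin 5, a < b → ∀ c : Fin 5, b < c → ∀ d : Fin 5, c < d →
    ∀ a' b' : Fin 5, a' < b' → ∀ c' : Fin 5, b' < c' → ∀ d' : Fin 5, c' < d' →
    0 ≤ (B.submatrix ![a,b,c,d] ![a',b',c',d']).det := by decide

lemma key5 : ∀ a b : Fin 5, a < b → ∀ c : Fin 5, b < c → ∀ d : Fin 5, c < d →
    ∀ e : Fin 5, d < e →
    ∀ a' b' : Fin 5, a' < b' → ∀ c' : Fin 5, b' < c' → ∀ d' : Fin 5, c' < d' →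
    ∀ e' : Fin 5, d' < e' →
    0 ≤ (B.submatrix ![a,b,c,d,e] ![a',b',c',d',e']).det := by decide

lemma det_cast {k : ℕ} (r c : Fin k → Fin 5) :
    (A.submatrix r c).det = ((B.submatrix r c).det : ℝ) := by
  have h := (RingHom.map_det (Int.castRingHom ℝ) (B.submatrix r c)).symm
  rw [RingHom.mapMatrix_apply, Int.coe_castRingHom] at h
  exact h

lemma A_TN : IsTotallyNonneg A := by
  intro k r c hr hc
  match k with
  | 0 => simp [Matrix.det_fin_zero]
  | 1 =>
      have hrr : r = ![r 0] := by funext i; fin_cases i <;> rfl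
      have hcc : c = ![c 0] := by funext i; fin_cases i <;> rfl
      rw [det_cast, hrr, hcc]
      exact_mod_cast key1 (r 0) (c 0)
  | 2 =>
      have hrr : r = ![r 0, r 1] := by funext i; fin_cases i <;> rfl
      have hcc : c = ![c 0, c 1] := by funext i; fin_cases i <;> rfl
      rw [det_cast, hrr, hcc]
      exact_mod_cast key2 _ _ (hr (by decide)) _ _ (hc (by decide))
  | 3 =>
      have hrr : r = ![r 0, r 1, r 2] := by funext i; fin_cases i <;> rfl
      have hcc : c = ![c 0, c 1, c 2] := by funext i; fin_cases i <;> rfl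
      rw [det_cast, hrr, hcc]
      exact_mod_cast key3 _ _ (hr (by decide)) _ (hr (by decide))
        _ _ (hc (by decide)) _ (hc (by decide))
  | 4 =>
      have hrr : r = ![r 0, r 1, r 2, r 3] := by funext i; fin_cases i <;> rfl
      have hcc : c = ![c 0, c 1, c 2, c 3] := by funext i; fin_cases i <;> rfl
      rw [det_cast, hrr, hcc]
      exact_mod_cast key4 _ _ (hr (by decide)) _ (hr (by decide)) _ (hr (by decide))
        _ _ (hc (by decide)) _ (hc (by decide)) _ (hc (by decide))
  | 5 =>
      have hrr : r = ![r 0, r 1, r 2, r 3, r 4] := by funext i; fin_cases i <;> rfl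
      have hcc : c = ![c 0, c 1, c 2, c 3, c 4] := by funext i; fin_cases i <;> rfl
      rw [det_cast, hrr, hcc]
      exact_mod_cast key5 _ _ (hr (by decide)) _ (hr (by decide)) _ (hr (by decide))
        _ (hr (by decide))
        _ _ (hc (by decide)) _ (hc (by decide)) _ (hc (by decide)) _ (hc (by decide))
  | (m + 6) =>
      exfalso
      have : Fintype.card (Fin (m + 6)) ≤ Fintype.card (Fin 5) :=
        Fintype.card_le_of_injective r hr.injective
      simp at this

lemma consec_eq : consecMinors A = Lz.map (Int.cast) := by
  ext i j
  simp only [consecMinors, Lz, A, Matrix.map_apply, Matrix.of_apply]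
  push_cast
  ring

lemma L_not_TN : ¬ IsTotallyNonneg (consecMinors A) := by
  intro h
  have h4 := h 4 id id strictMono_id strictMono_id
  rw [Matrix.submatrix_id_id, consec_eq] at h4
  have h5 := (RingHom.map_det (Int.castRingHom ℝ) Lz).symm
  rw [RingHom.mapMatrix_apply, Int.coe_castRingHom] at h5
  rw [h5] at h4
  have hC : Lz.det = -288 := by decide
  rw [hC] at h4
  norm_num at h4

end LCounterexample

/-- There is a totally nonnegative square real matrix `A` such that `𝓛(A)`, its matrix
of consecutive `2 × 2` minors, is not totally nonnegative. -/
theorem exists_totallyNonneg_with_consecMinors_not_totallyNonneg :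
    ∃ (n : ℕ) (A : Matrix (Fin (n + 1)) (Fin (n + 1)) ℝ),
      IsTotallyNonneg A ∧ ¬ IsTotallyNonneg (consecMinors A) := by
  exact ⟨4, LCounterexample.A, LCounterexample.A_TN, LCounterexample.L_not_TN⟩
end

section
/- Let $n \geq 4$ and let $a_0, a_1, \dots, a_{n-1}$ be real numbers, with the convention $a_j = 0$ for $j < 0$ or $j \geq n$. Suppose the $n \times n$ Toeplitz matrix $W = (w_{i,j})$ with $w_{i,j} = a_{j-i}$ (indices $0 \le i,j \le n-1$) is totally nonnegative. Define $b_m = a_m^2 - a_{m-1} a_{m+1}$. Then the sequence $\{b_m\}$ is log-concave in the range where it arises from $W$: for every $m$ with $1 \leq m \leq n-3$, one has $b_m^2 - b_{m-1} b_{m+1} \geq 0$. -/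
/-- Let `n ≥ 4` and let `a₀, …, a_{n-1}` be real numbers, extended by `0` outside that
range.  If the `n × n` Toeplitz matrix `W` with `w_{i,j} = a_{j-i}` is totally
nonnegative, then the sequence `b_m = a_m² - a_{m-1} a_{m+1}` is log-concave in the
range arising from `W`: `b_m² - b_{m-1} b_{m+1} ≥ 0` for `1 ≤ m ≤ n - 3`. -/
theorem toeplitz_totallyNonneg_log_concave
    (n : ℕ) (hn : 4 ≤ n) (a : ℤ → ℝ)
    (ha_neg : ∀ j : ℤ, j < 0 → a j = 0)
    (ha_big : ∀ j : ℤ, (n : ℤ) ≤ j → a j = 0)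
    (hW : IsTotallyNonneg (Matrix.of fun i j : Fin n => a ((j : ℤ) - (i : ℤ))))
    (b : ℤ → ℝ) (hb : ∀ m : ℤ, b m = a m ^ 2 - a (m - 1) * a (m + 1)) :
    ∀ m : ℤ, 1 ≤ m → m ≤ (n : ℤ) - 3 →
      0 ≤ b m ^ 2 - b (m - 1) * b (m + 1) := by
  intro m hm1 hm2
  obtain ⟨M, rfl⟩ : ∃ M : ℕ, m = (M : ℤ) := ⟨m.toNat, by omega⟩
  have hM1 : 1 ≤ M := by exact_mod_cast hm1
  have hM3 : M + 3 ≤ n := by omega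
  -- `a M ≥ 0` from the 1×1 minor
  have ham : 0 ≤ a M := by
    have := hW 1 (fun _ => ⟨0, by omega⟩) (fun _ => ⟨M, by omega⟩)
      (Subsingleton.strictMono _) (Subsingleton.strictMono _)
    simpa [Matrix.det_fin_one] using this
  -- 3×3 minor with rows {0,1,2}, columns {M, M+1, M+2}
  have hD := hW 3 (fun i => ⟨(i : ℕ), by omega⟩) (fun i => ⟨M + (i : ℕ), by omega⟩)
      (fun i j hij => Fin.mk_lt_mk.mpr hij)
      (fun i j hij => Fin.mk_lt_mk.mpr (Nat.add_lt_add_left hij M))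
  rw [Matrix.det_fin_three] at hD
  simp only [Matrix.submatrix_apply, Matrix.of_apply, Fin.val_zero, Fin.val_one,
    Fin.val_two] at hD
  push_cast at hD
  have hbm := hb M
  have hbm1 := hb ((M : ℤ) - 1)
  have hbp1 := hb ((M : ℤ) + 1)
  rw [hbm, hbm1, hbp1]
  -- Dodgson condensation: b_m² − b_{m−1} b_{m+1} = a_m · (the above 3×3 minor) ≥ 0
  ring_nf at hD ⊢
  nlinarith [mul_nonneg ham hD]
end
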